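/- arXiv:2310.18716 — 4 statements merged into one kernel-verified Lean document; each statement's English description precedes it below -/
import Mathlib

section
/- Let u ∈ ℝ^n be a vector such that there is no permutation matrix P with u = -Pu. Then there exists a positive odd integer h ≤ n such that Σ_{i=1}^n u_i^h ≠ 0. -/
open BigOperators

open Finset MvPolynomial in
/-- If two tuples are permutations of each other (as lists), there is a permutation
relating them. -/
lemma exists_comp_perm_of_perm {α : Type*} [LinearOrder α] {n : ℕ} (f g : Fin n → α)
    (h : List.Perm (List.ofFn f) (List.ofFn g)) :
    ∃ σ : Equiv.Perm (Fin n), f = g ∘ σ := by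
  classical
  set τ1 := Tuple.sort f
  set τ2 := Tuple.sort g
  have hperm : List.Perm (List.ofFn (f ∘ τ1)) (List.ofFn (g ∘ τ2)) :=
    ((Equiv.Perm.ofFn_comp_perm τ1 f).trans h).trans
      (Equiv.Perm.ofFn_comp_perm τ2 g).symm
  have heq : List.ofFn (f ∘ τ1) = List.ofFn (g ∘ τ2) :=
    List.Perm.eq_of_sortedLE (Tuple.monotone_sort f).sortedLE_ofFn
      (Tuple.monotone_sort g).sortedLE_ofFn hperm
  have hfg : f ∘ τ1 = g ∘ τ2 := List.ofFn_injective heq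
  refine ⟨τ1.symm.trans τ2, funext fun i => ?_⟩
  have := congrFun hfg (τ1.symm i)
  simpa using this

open Finset MvPolynomial in
lemma key_multiset_symm {n : ℕ} (u : Fin n → ℝ)
    (h0 : ∀ k : ℕ, Odd k → 0 < k → k ≤ n → ∑ i, (u i) ^ k = 0) :
    ∃ σ : Equiv.Perm (Fin n), u = -(u ∘ σ) := by
  classical
  set v : Fin n → ℝ := fun i => -u i with hv
  -- power sums agree
  have hp : ∀ b : ℕ, 0 < b → b ≤ n →
      aeval u (psum (Fin n) ℝ b) = aeval v (psum (Fin n) ℝ b) := by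
    intro b hb1 hb2
    simp only [psum, map_sum, map_pow, aeval_X]
    rcases Nat.even_or_odd b with he | ho
    · exact Finset.sum_congr rfl fun i _ => (he.neg_pow (u i)).symm
    · have hvsum : ∑ i, v i ^ b = -∑ i, (u i) ^ b := by
        rw [← Finset.sum_neg_distrib]
        exact Finset.sum_congr rfl fun i _ => (ho.neg_pow (u i))
      rw [h0 b ho hb1 hb2, hvsum, h0 b ho hb1 hb2, neg_zero]
  -- elementary symmetric polynomials agree
  have hE : ∀ k : ℕ, k ≤ n →
      aeval u (esymm (Fin n) ℝ k) = aeval v (esymm (Fin n) ℝ k) := by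
    intro k
    induction k using Nat.strong_induction_on with
    | _ k ih =>
      intro hk
      rcases Nat.eq_zero_or_pos k with h0' | hkpos
      · subst h0'; simp [esymm_zero]
      · have h1 := congrArg (aeval u) (mul_esymm_eq_sum (Fin n) ℝ k)
        have h2 := congrArg (aeval v) (mul_esymm_eq_sum (Fin n) ℝ k)
        simp only [map_mul, map_natCast, map_sum, map_pow, map_neg, map_one] at h1 h2
        have hsum : (∑ a ∈ (Finset.HasAntidiagonal.antidiagonal k).filter (fun a => a.1 < k),
              (-1 : ℝ) ^ a.1 * aeval u (esymm (Fin n) ℝ a.1) * aeval u (psum (Fin n) ℝ a.2))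
            = ∑ a ∈ (Finset.HasAntidiagonal.antidiagonal k).filter (fun a => a.1 < k),
              (-1 : ℝ) ^ a.1 * aeval v (esymm (Fin n) ℝ a.1) * aeval v (psum (Fin n) ℝ a.2) := by
          refine Finset.sum_congr rfl fun a ha => ?_
          rw [Finset.mem_filter, Finset.HasAntidiagonal.mem_antidiagonal] at ha
          obtain ⟨hadd, hlt⟩ := ha
          rw [ih a.1 hlt (le_trans (le_of_lt hlt) hk),
            hp a.2 (by omega) (by omega)]
        have hcast : (k : ℝ) ≠ 0 := Nat.cast_ne_zero.mpr hkpos.ne'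
        apply mul_left_cancel₀ hcast
        rw [h1, h2, hsum]
  -- polynomial equality via Vieta
  have hm : Multiset.map u Finset.univ.val = Multiset.map v Finset.univ.val := by
    have hpoly : ((Multiset.map u Finset.univ.val).map
          fun t => Polynomial.X - Polynomial.C t).prod
        = ((Multiset.map v Finset.univ.val).map
          fun t => Polynomial.X - Polynomial.C t).prod := by
      rw [Multiset.prod_X_sub_X_eq_sum_esymm, Multiset.prod_X_sub_X_eq_sum_esymm]
      simp only [Multiset.card_map]
      refine Finset.sum_congr rfl fun j hj => ?_
      rw [Finset.mem_range] at hj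
      have hjn : j ≤ n := by
        have : Multiset.card (Finset.univ.val : Multiset (Fin n)) = n := by simp
        omega
      rw [← aeval_esymm_eq_multiset_esymm (Fin n) ℝ j u,
        ← aeval_esymm_eq_multiset_esymm (Fin n) ℝ j v, hE j hjn]
    have := congrArg Polynomial.roots hpoly
    rwa [Polynomial.roots_multiset_prod_X_sub_C, Polynomial.roots_multiset_prod_X_sub_C] at this
  -- extract permutation
  have hlist : List.Perm (List.ofFn u) (List.ofFn v) := by
    rw [← Multiset.coe_eq_coe]
    simpa [List.ofFn_eq_map, ← Multiset.map_coe] using hm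
  obtain ⟨σ, hσ⟩ := exists_comp_perm_of_perm u v hlist
  exact ⟨σ, by funext i; simpa [hv] using congrFun hσ i⟩

/-- If `u` is not equal to `-Pu` for any permutation matrix `P`, then some odd
power sum `∑ uᵢʰ` with `h ≤ n` is nonzero. -/
theorem exists_odd_power_sum_ne_zero {n : ℕ} (u : Fin n → ℝ)
    (h : ∀ σ : Equiv.Perm (Fin n), u ≠ -(u ∘ σ)) :
    ∃ k : ℕ, Odd k ∧ 0 < k ∧ k ≤ n ∧ ∑ i, (u i) ^ k ≠ 0 := by
  by_contra hc
  push_neg at hc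
  obtain ⟨σ, hσ⟩ := key_multiset_symm u fun k hodd hpos hle => hc k hodd hpos hle
  exact h σ hσ
end

section
/- Let u ∈ ℝ^n be such that all odd power sums Σ_{i=1}^n u_i^h for odd 1 ≤ h ≤ n vanish. Then the multiset of entries of u is invariant under negation, i.e., for every real c, the number of indices i with u_i = c equals the number of indices with u_i = -c. -/
open BigOperators

open Polynomial in
lemma aux_multiset_neg_eq {n : ℕ} (u : Fin n → ℝ)
    (h : ∀ k : ℕ, Odd k → 1 ≤ k → k ≤ n → ∑ i, (u i) ^ k = 0) :
    (Finset.univ.val.map u).map (fun x : ℝ => -x) = Finset.univ.val.map u := by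
  classical
  set s : Multiset ℝ := Finset.univ.val.map u with hs
  have hcard : Multiset.card s = n := by simp [hs]
  -- Step 1: odd elementary symmetric functions vanish
  have hE : ∀ k : ℕ, Odd k → s.esymm k = 0 := by
    intro k hk
    induction k using Nat.strong_induction_on with
    | _ k ih =>
      by_cases hkn : k ≤ n
      swap
      · -- esymm k = 0 when k > card s
        have : Multiset.card s < k := by omega
        simp only [Multiset.esymm]
        rw [Multiset.powersetCard_eq_empty _ (by omega)]
        simp
      · have hnewton := congrArg (MvPolynomial.aeval u) (MvPolynomial.mul_esymm_eq_sum (Fin n) ℝ k)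
        simp only [map_mul, map_sum, map_pow, map_neg, map_one, map_natCast,
          MvPolynomial.aeval_esymm_eq_multiset_esymm] at hnewton
        have hps : ∀ m : ℕ, MvPolynomial.aeval u (MvPolynomial.psum (Fin n) ℝ m)
            = ∑ i, (u i) ^ m := by
          intro m
          simp [MvPolynomial.psum]
        rw [show (Finset.univ.val.map u) = s from rfl] at hnewton
        have hzero : ∑ a ∈ (Finset.HasAntidiagonal.antidiagonal k).filter (fun a => a.1 < k),
            (-1 : ℝ) ^ a.1 * s.esymm a.1 * (MvPolynomial.aeval u (MvPolynomial.psum (Fin n) ℝ a.2))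
            = 0 := by
          apply Finset.sum_eq_zero
          intro a ha
          simp only [Finset.mem_filter, Finset.HasAntidiagonal.mem_antidiagonal] at ha
          obtain ⟨hsum, hlt⟩ := ha
          rcases Nat.even_or_odd a.2 with he | ho
          · -- a.2 even, so a.1 odd, a.1 < k
            have ha1 : Odd a.1 := by
              rcases Nat.even_or_odd a.1 with h1 | h1
              · exfalso
                have : Even k := by rw [← hsum]; exact h1.add he
                exact (Nat.not_even_iff_odd.mpr hk) this
              · exact h1
            rw [ih a.1 hlt ha1]
            ring
          · -- a.2 odd, use the power sum hypothesis
            have h2 : 1 ≤ a.2 := ho.pos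
            have h2n : a.2 ≤ n := le_trans (by omega) hkn
            rw [hps, h a.2 ho h2 h2n]
            ring
        rw [hzero, mul_zero] at hnewton
        have hkne : (k : ℝ) ≠ 0 := Nat.cast_ne_zero.mpr hk.pos.ne'
        exact (mul_eq_zero.mp hnewton).resolve_left hkne
  -- Step 2: the characteristic polynomials of s and -s agree
  set t : Multiset ℝ := s.map (fun x : ℝ => -x) with ht
  have htcard : Multiset.card t = n := by simp [ht, hcard]
  have hPQ : (s.map fun a => X - C a).prod = (t.map fun a => X - C a).prod := by
    have hPd : (s.map fun a => X - C a).prod.natDegree = n := by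
      rw [natDegree_multiset_prod_X_sub_C_eq_card, hcard]
    have hQd : (t.map fun a => X - C a).prod.natDegree = n := by
      rw [natDegree_multiset_prod_X_sub_C_eq_card, htcard]
    ext k
    rcases le_or_gt k n with hkn | hkn
    · rw [Multiset.prod_X_sub_C_coeff s (by omega), Multiset.prod_X_sub_C_coeff t (by omega),
        hcard, htcard]
      have : t.esymm (n - k) = (-1) ^ (n - k) * s.esymm (n - k) :=
        Multiset.esymm_neg s (n - k)
      rw [this]
      rcases Nat.even_or_odd (n - k) with he | ho
      · rw [he.neg_one_pow]; ring
      · rw [hE _ ho]; ring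
    · rw [coeff_eq_zero_of_natDegree_lt (by omega), coeff_eq_zero_of_natDegree_lt (by omega)]
  -- Step 3: compare roots
  have := congrArg Polynomial.roots hPQ
  rwa [roots_multiset_prod_X_sub_C, roots_multiset_prod_X_sub_C, eq_comm] at this

/-- If all odd power sums `∑ uᵢʰ` with `1 ≤ h ≤ n` vanish, then the multiset of
entries of `u` is symmetric about `0`: for every `c`, the number of indices with
`uᵢ = c` equals the number of indices with `uᵢ = -c`. -/
theorem odd_power_sums_zero_entries_symm {n : ℕ} (u : Fin n → ℝ)
    (h : ∀ k : ℕ, Odd k → 1 ≤ k → k ≤ n → ∑ i, (u i) ^ k = 0) (c : ℝ) :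
    {i : Fin n | u i = c}.ncard = {i : Fin n | u i = -c}.ncard := by
  classical
  have key := aux_multiset_neg_eq u h
  set s : Multiset ℝ := Finset.univ.val.map u with hs
  have hcount : ∀ d : ℝ, {i : Fin n | u i = d}.ncard = s.count d := by
    intro d
    rw [show {i : Fin n| u i = d} = ↑(Finset.univ.filter (fun i => u i = d)) by
      ext i; simp, Set.ncard_coe_finset]
    rw [hs, Multiset.count_map, Finset.card, Finset.filter_val]
    congr 1
    exact Multiset.filter_congr (fun x _ => eq_comm)
  rw [hcount, hcount]
  have hneg : Function.Injective (fun x : ℝ => -x) := fun a b hab => by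
    simpa using hab
  calc s.count c = (s.map (fun x : ℝ => -x)).count c := by rw [key]
    _ = (s.map (fun x : ℝ => -x)).count (-(-c)) := by rw [neg_neg]
    _ = s.count (-c) := Multiset.count_map_eq_count' _ s hneg _
end

section
/- Let G, H be groups with H acting on sets X and Y, G acting on Y, and let f : X → Y be a (possibly multivalued) H-equivariant map whose fibers of ambiguity lie in G-orbits. An input x ∈ X admits a canonization (a map A : Y → Y that is G-invariant, H-equivariant, and universal on the orbit of x) if and only if there do not exist h ∈ H and g ∈ G such that x ≠ hx and f(hx) = g·f(x). -/
/-- General canonizability criterion. For an `H`-equivariant embedding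
`f : X → Y`, whose ambiguity is given by a commuting action of `G` on `Y`,
an input `x` admits a canonization (a `G`-invariant, `H`-equivariant,
universal map `A` on the orbit of `f x`) iff there are no `h ∈ H`, `g ∈ G`
with `x ≠ h • x` and `f (h • x) = g • f x`. -/
theorem canonizable_iff {G H X Y : Type*} [Group G] [Group H]
    [MulAction H X] [MulAction H Y] [MulAction G Y] [SMulCommClass G H Y]
    (f : X → Y) (hf : ∀ (h : H) (x : X), f (h • x) = h • f x) (x : X) :
    (∃ A : Y → Y,
      (∀ (g : G) (h : H), A (g • f (h • x)) = A (f (h • x))) ∧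
      (∀ h : H, A (f (h • x)) = h • A (f x)) ∧
      (∀ h : H, x ≠ h • x → A (f x) ≠ A (f (h • x)))) ↔
    ¬∃ (h : H) (g : G), x ≠ h • x ∧ f (h • x) = g • f x := by
  classical
  constructor
  · rintro ⟨A, hG, hH, hU⟩ ⟨h, g, hne, heq⟩
    have h1 : A (f (h • x)) = A (f x) := by
      calc A (f (h • x)) = A (g • f x) := by rw [heq]
        _ = A (g • f ((1:H) • x)) := by rw [one_smul]
        _ = A (f ((1:H) • x)) := hG g 1
        _ = A (f x) := by rw [one_smul]
    exact hU h hne h1.symm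
  · intro hno
    have key : ∀ (g₁ g₂ : G) (h₁ h₂ : H),
        g₁ • f (h₁ • x) = g₂ • f (h₂ • x) → h₁ • f x = h₂ • f x := by
      intro g₁ g₂ h₁ h₂ he
      have hx : h₁ • x = h₂ • x := by
        by_contra hx
        have hx2 : x ≠ (h₂⁻¹ * h₁) • x := by
          intro h
          apply hx
          have hx' : h₁ • x = h₂ • ((h₂⁻¹ * h₁) • x) := by
            rw [mul_smul, smul_inv_smul]
          rw [hx', ← h]
        apply hno
        refine ⟨h₂⁻¹ * h₁, g₁⁻¹ * g₂, hx2, ?_⟩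
        have : f (h₁ • x) = (g₁⁻¹ * g₂) • f (h₂ • x) := by
          rw [mul_smul, ← he, inv_smul_smul]
        calc f ((h₂⁻¹ * h₁) • x) = h₂⁻¹ • f (h₁ • x) := by
              rw [mul_smul, hf]
          _ = h₂⁻¹ • (g₁⁻¹ * g₂) • f (h₂ • x) := by rw [this]
          _ = (g₁⁻¹ * g₂) • h₂⁻¹ • f (h₂ • x) := (smul_comm _ _ _).symm
          _ = (g₁⁻¹ * g₂) • f x := by rw [← hf, inv_smul_smul]
      rw [← hf, ← hf, hx]
    set A : Y → Y := fun y =>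
      if hy : ∃ g : G, ∃ h : H, y = g • f (h • x) then
        hy.choose_spec.choose • f x else y with hA
    have hAval : ∀ (g : G) (h : H), A (g • f (h • x)) = h • f x := by
      intro g h
      have hy : ∃ g' : G, ∃ h' : H, g • f (h • x) = g' • f (h' • x) :=
        ⟨g, h, rfl⟩
      rw [hA]
      simp only [dif_pos hy]
      exact (key hy.choose g hy.choose_spec.choose h
        hy.choose_spec.choose_spec.symm)
    have hAfx : ∀ h : H, A (f (h • x)) = h • f x := by
      intro h
      have := hAval 1 h
      rwa [one_smul] at this
    refine ⟨A, ?_, ?_, ?_⟩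
    · intro g h; rw [hAval, hAfx]
    · intro h
      rw [hAfx]
      have h0 : A (f x) = f x := by
        have := hAfx 1; rwa [one_smul, one_smul] at this
      rw [h0]
    · intro h hne
      have h0 : A (f x) = f x := by
        have := hAfx 1; rwa [one_smul, one_smul] at this
      rw [h0, hAfx]
      intro hc
      apply hno
      refine ⟨h, 1, hne, ?_⟩
      rw [one_smul, hf, ← hc]
end

section
/- Let u ∈ ℝ^n with entries grouped by absolute value, and suppose every group sum vanishes: for each distinct absolute value a, Σ_{i : |u_i| = a} u_i = 0. Then there exists a permutation matrix P with u = -Pu. -/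
open BigOperators

/-- If every group of entries of `u` sharing a common absolute value sums to
zero, then `u = -Pu` for some permutation matrix `P`. -/
theorem exists_perm_neg_of_group_sums_zero {n : ℕ} (u : Fin n → ℝ)
    (h : ∀ a : ℝ, ∑ i, (if |u i| = a then u i else 0) = 0) :
    ∃ σ : Equiv.Perm (Fin n), u = -(u ∘ σ) := by
  classical
  -- counting lemma: #{i | u i = x} = #{i | u i = -x}
  have key : ∀ x : ℝ,
      (Finset.univ.filter fun i => u i = x).card
        = (Finset.univ.filter fun i => u i = -x).card := by
    intro x
    rcases eq_or_ne x 0 with rfl | hx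
    · simp
    · have hsum := h |x|
      have hsplit : ∀ i, (if |u i| = |x| then u i else 0)
          = (if u i = x then x else 0) + (if u i = -x then -x else 0) := by
        intro i
        have hne : ¬ (x = -x) := fun hc => hx (by linarith)
        have hne' : ¬ (-x = x) := fun hc => hx (by linarith)
        rcases eq_or_ne (u i) x with h1 | h1
        · rw [h1, if_pos rfl, if_pos rfl, if_neg hne]; ring
        · rcases eq_or_ne (u i) (-x) with h2 | h2
          · rw [h2, if_pos (abs_neg x), if_neg hne', if_pos rfl]; ring
          · have h3 : |u i| ≠ |x| := by
              intro hc
              rcases abs_eq_abs.mp hc with hc | hc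
              · exact h1 hc
              · exact h2 hc
            rw [if_neg h3, if_neg h1, if_neg h2]; ring
      rw [Finset.sum_congr rfl (fun i _ => hsplit i), Finset.sum_add_distrib,
        ← Finset.sum_filter, ← Finset.sum_filter, Finset.sum_const,
        Finset.sum_const, nsmul_eq_mul, nsmul_eq_mul, mul_neg] at hsum
      have hsub : (((Finset.univ.filter fun i => u i = x).card : ℝ)
          - ((Finset.univ.filter fun i => u i = -x).card : ℝ)) * x = 0 := by
        rw [sub_mul]; linarith
      rcases mul_eq_zero.mp hsub with h' | h'
      · exact_mod_cast sub_eq_zero.mp h'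
      · exact absurd h' hx
  -- multiset equality: values of u and of -u agree
  set v : Fin n → ℝ := fun i => -u i with hv
  have hperm : (List.ofFn u).Perm (List.ofFn v) := by
    rw [← Multiset.coe_eq_coe, ← Fin.univ_val_map, ← Fin.univ_val_map]
    refine Multiset.ext.mpr fun x => ?_
    rw [Multiset.count_map, Multiset.count_map]
    have e1 : Multiset.filter (fun i => x = u i) Finset.univ.val
        = (Finset.univ.filter fun i => u i = x).val := by
      rw [Finset.filter_val]
      exact Multiset.filter_congr fun i _ => eq_comm
    have e2 : Multiset.filter (fun i => x = v i) Finset.univ.val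
        = (Finset.univ.filter fun i => u i = -x).val := by
      rw [Finset.filter_val]
      refine Multiset.filter_congr fun i _ => ?_
      simp only [hv]
      constructor
      · intro h'; linarith
      · intro h'; linarith
    rw [e1, e2, ← Finset.card_def, ← Finset.card_def, key x]
  -- sort both tuples
  set s₁ := Tuple.sort u with hs₁
  set s₂ := Tuple.sort v with hs₂
  have hchain : (List.ofFn (u ∘ s₁)).Perm (List.ofFn (v ∘ s₂)) :=
    ((Equiv.Perm.ofFn_comp_perm s₁ u).trans hperm).trans
      (Equiv.Perm.ofFn_comp_perm s₂ v).symm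
  have heq : List.ofFn (u ∘ s₁) = List.ofFn (v ∘ s₂) :=
    List.Perm.eq_of_sortedLE
      (Tuple.monotone_sort u).sortedLE_ofFn (Tuple.monotone_sort v).sortedLE_ofFn hchain
  have hfun : u ∘ s₁ = v ∘ s₂ := List.ofFn_injective heq
  refine ⟨s₂.symm.trans s₁, funext fun i => ?_⟩
  have := congrFun hfun (s₂.symm i)
  simp only [Function.comp_apply, Equiv.apply_symm_apply, hv] at this
  simp only [Pi.neg_apply, Function.comp_apply, Equiv.trans_apply]
  rw [this]
  ring
end
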